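/- Set φ = τ ∘ σ. Then φ ∘ φ = τ′, and for every subset T of Fin (n+1) with σ·T = T one has the equality of orbits {T, φ·T, (φ∘φ)·T, (φ∘φ∘φ)·T} = O(T) = {T, τ·T, τ′·T, (τ∘τ′)·T}. (Thus for σ-invariant types, the orbit under the cyclic group generated by φ — which is Ξ^nr in type ²D_{2n−1} — coincides with the orbit under the Klein four-group {id, τ, τ′, τ∘τ′}.) -/

import Mathlib

open Fin.NatCast

/-- Vertices of the affine Dynkin diagram of type `D_n` are identified with
`Fin (n+1) = {0, 1, …, n}`. `sigmaD n` is the transposition exchanging `n-1` and `n`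
(the unramified Galois involution). -/
def sigmaD (n : ℕ) : Fin (n + 1) → Fin (n + 1) := fun i =>
  if (i : ℕ) = n - 1 then (↑n : Fin (n + 1))
  else if (i : ℕ) = n then (↑(n - 1) : Fin (n + 1))
  else i

/-- `tauPrimeD n` exchanges `0` with `1` and `n-1` with `n`, fixing all other vertices
(the generator of `Ξ`). -/
def tauPrimeD (n : ℕ) : Fin (n + 1) → Fin (n + 1) := fun i =>
  if (i : ℕ) = 0 then (↑(1 : ℕ) : Fin (n + 1))
  else if (i : ℕ) = 1 then (↑(0 : ℕ) : Fin (n + 1))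
  else if (i : ℕ) = n - 1 then (↑n : Fin (n + 1))
  else if (i : ℕ) = n then (↑(n - 1) : Fin (n + 1))
  else i

/-- `tauD n` is the involution with `τ(0) = n-1`, `τ(1) = n`, `τ(n-1) = 0`, `τ(n) = 1` and
`τ(i) = n - i` for `2 ≤ i ≤ n-2`. -/
def tauD (n : ℕ) : Fin (n + 1) → Fin (n + 1) := fun i =>
  if (i : ℕ) = 0 then (↑(n - 1) : Fin (n + 1))
  else if (i : ℕ) = 1 then (↑n : Fin (n + 1))
  else if (i : ℕ) = n - 1 then (↑(0 : ℕ) : Fin (n + 1))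
  else if (i : ℕ) = n then (↑(1 : ℕ) : Fin (n + 1))
  else (↑(n - (i : ℕ)) : Fin (n + 1))

/-- The extremal vertices `{0, 1, n-1, n}` of the affine Dynkin diagram of type `D_n`. -/
def extremalD (n : ℕ) : Set (Fin (n + 1)) :=
  {(↑(0 : ℕ) : Fin (n + 1)), (↑(1 : ℕ) : Fin (n + 1)), (↑(n - 1) : Fin (n + 1)),
    (↑n : Fin (n + 1))}

/-- The orbit `O(T) = {T, τ·T, τ′·T, (τ∘τ′)·T}` of a type `T` under the Klein four-group
`{id, τ, τ′, τ∘τ′}` (realizing `Ξ^nr`), acting on subsets by images. -/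
def orbD (n : ℕ) (T : Set (Fin (n + 1))) : Set (Set (Fin (n + 1))) :=
  {T, tauD n '' T, tauPrimeD n '' T, (tauD n ∘ tauPrimeD n) '' T}

/-!
Writing `φ = τ ∘ σ`, a direct check on vertices gives `φ ∘ φ = τ′`, and `σ` commutes with `τ′`.
Hence on a `σ`-invariant type `T` one has `φ·T = τ·T`, `φ²·T = τ′·T` and
`φ³·T = τ·(σ·(τ′·T)) = τ·(τ′·(σ·T)) = (τ ∘ τ′)·T`.
-/

section

variable {n : ℕ}

lemma val_sigmaD (i : Fin (n + 1)) :
    (sigmaD n i : ℕ) = if (i : ℕ) = n - 1 then n else if (i : ℕ) = n then n - 1 else i := by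
  unfold sigmaD
  split_ifs <;> first | rfl | exact Fin.val_cast_of_lt (by omega)

lemma val_tauPrimeD (hn : 1 ≤ n) (i : Fin (n + 1)) :
    (tauPrimeD n i : ℕ) =
      if (i : ℕ) = 0 then 1 else if (i : ℕ) = 1 then 0 else if (i : ℕ) = n - 1 then n
      else if (i : ℕ) = n then n - 1 else i := by
  unfold tauPrimeD
  split_ifs <;> first | rfl | exact Fin.val_cast_of_lt (by omega)

lemma val_tauD (hn : 1 ≤ n) (i : Fin (n + 1)) :
    (tauD n i : ℕ) =
      if (i : ℕ) = 0 then n - 1 else if (i : ℕ) = 1 then n else if (i : ℕ) = n - 1 then 0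
      else if (i : ℕ) = n then 1 else n - i := by
  unfold tauD
  split_ifs <;> first | rfl | exact Fin.val_cast_of_lt (by omega)

lemma val_tauD_comp_sigmaD (hn : 3 ≤ n) (i : Fin (n + 1)) :
    ((tauD n ∘ sigmaD n) i : ℕ) =
      if (i : ℕ) = 0 then n - 1 else if (i : ℕ) = 1 then n else if (i : ℕ) = n - 1 then 1
      else if (i : ℕ) = n then 0 else n - i := by
  have hi := i.isLt
  simp only [Function.comp_apply, val_tauD (by omega : 1 ≤ n), val_sigmaD]
  split_ifs <;> omega

theorem tauD_comp_sigmaD_sq (hn : 3 ≤ n) :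
    (tauD n ∘ sigmaD n) ∘ (tauD n ∘ sigmaD n) = tauPrimeD n := by
  funext i
  apply Fin.ext
  have hi := i.isLt
  rw [Function.comp_apply, val_tauD_comp_sigmaD hn, val_tauD_comp_sigmaD hn,
    val_tauPrimeD (by omega)]
  split_ifs <;> first | contradiction | omega

theorem sigmaD_comp_tauPrimeD (hn : 3 ≤ n) :
    sigmaD n ∘ tauPrimeD n = tauPrimeD n ∘ sigmaD n := by
  funext i
  apply Fin.ext
  have hi := i.isLt
  simp only [Function.comp_apply, val_sigmaD, val_tauPrimeD (by omega : 1 ≤ n)]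
  split_ifs <;> omega

end

/-- Type `²D_{2n-1}`: with `φ = τ ∘ σ`, one has `φ ∘ φ = τ′`, and for every `σ`-invariant
type `T` the orbit of `T` under the cyclic group generated by `φ` (which is `Ξ^nr` in type
`²D_{2n-1}`) coincides with the orbit `O(T)` under the Klein four-group
`{id, τ, τ′, τ∘τ′}`. -/
theorem stmt13 (n : ℕ) (hn : 4 ≤ n) :
    (tauD n ∘ sigmaD n) ∘ (tauD n ∘ sigmaD n) = tauPrimeD n ∧
    ∀ T : Set (Fin (n + 1)), sigmaD n '' T = T →
      ({T, (tauD n ∘ sigmaD n) '' T,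
        ((tauD n ∘ sigmaD n) ∘ (tauD n ∘ sigmaD n)) '' T,
        ((tauD n ∘ sigmaD n) ∘ ((tauD n ∘ sigmaD n) ∘ (tauD n ∘ sigmaD n))) '' T} :
          Set (Set (Fin (n + 1)))) = orbD n T := by
  have hφφ := tauD_comp_sigmaD_sq (by omega : 3 ≤ n)
  refine ⟨hφφ, fun T hT => ?_⟩
  have hφ : (tauD n ∘ sigmaD n) '' T = tauD n '' T := by rw [Set.image_comp, hT]
  have hφφφ : (tauD n ∘ sigmaD n) ∘ ((tauD n ∘ sigmaD n) ∘ (tauD n ∘ sigmaD n)) =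
      (tauD n ∘ tauPrimeD n) ∘ sigmaD n := by
    rw [hφφ, Function.comp_assoc, sigmaD_comp_tauPrimeD (by omega), Function.comp_assoc]
  rw [hφφφ, hφ, hφφ, Set.image_comp _ (sigmaD n), hT, orbD]
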